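/- arXiv:1308.4915 — 2 statements merged into one kernel-verified Lean document; each statement's English description precedes it below -/
import Mathlib

section
/- For any nonempty subset S ⊆ V with S^c nonempty, lim_{α→∞} λ^α(χ_S) = λ(S). -/
open Finset

/-- Dirichlet energy (gradient) form: `(1/2) ∑_{i,j} w_{ij} (ψ_i - ψ_j)²`. -/
noncomputable def gradE {n : ℕ} (w : Fin n → Fin n → ℝ) (ψ : Fin n → ℝ) : ℝ :=
  (1 / 2) * ∑ i, ∑ j, w i j * (ψ i - ψ j) ^ 2

/-- Weighted squared norm `∑ i, d_i^r ψ_i²`. -/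
noncomputable def dnorm {n : ℕ} (d : Fin n → ℝ) (r : ℝ) (ψ : Fin n → ℝ) : ℝ :=
  ∑ i, Real.rpow (d i) r * ψ i ^ 2

/-- First Dirichlet eigenvalue of the subset `S`. -/
noncomputable def dirEig {n : ℕ} (w : Fin n → Fin n → ℝ) (d : Fin n → ℝ) (r : ℝ)
    (S : Finset (Fin n)) : ℝ :=
  sInf { e : ℝ | ∃ ψ : Fin n → ℝ, (∀ i, i ∉ S → ψ i = 0) ∧ dnorm d r ψ = 1 ∧ e = gradE w ψ }

/-- Relaxed eigenvalue `λ^α(φ)`. -/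
noncomputable def lamAlpha {n : ℕ} (w : Fin n → Fin n → ℝ) (d : Fin n → ℝ) (r α : ℝ)
    (φ : Fin n → ℝ) : ℝ :=
  sInf { e : ℝ | ∃ ψ : Fin n → ℝ, dnorm d r ψ = 1 ∧
    e = gradE w ψ + α * ∑ i, Real.rpow (d i) r * (1 - φ i) * ψ i ^ 2 }

/-- Graph Laplacian `Δ_r = D^{-r}(D - W)` applied to `ψ` at vertex `i`. -/
noncomputable def lapApply {n : ℕ} (w : Fin n → Fin n → ℝ) (d : Fin n → ℝ) (r : ℝ)
    (ψ : Fin n → ℝ) (i : Fin n) : ℝ :=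
  Real.rpow (d i) (-r) * (d i * ψ i - ∑ j, w i j * ψ j)

/-- Indicator function of a vertex subset. -/
def ind {n : ℕ} (S : Finset (Fin n)) : Fin n → ℝ := fun i => if i ∈ S then 1 else 0

/-- The admissible class `𝒜_k`. -/
def memA {k n : ℕ} (Φ : Fin k → Fin n → ℝ) : Prop :=
  (∀ i v, 0 ≤ Φ i v ∧ Φ i v ≤ 1) ∧ ∀ v, ∑ i, Φ i v = 1

/-- The relaxed partition energy `Λ^α_k`. -/
noncomputable def LamK {k n : ℕ} (w : Fin n → Fin n → ℝ) (d : Fin n → ℝ) (r α : ℝ)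
    (Φ : Fin k → Fin n → ℝ) : ℝ :=
  ∑ i, lamAlpha w d r α (Φ i)

/-- The weighted graph is connected. -/
def gconn {n : ℕ} (w : Fin n → Fin n → ℝ) : Prop :=
  ∀ i j : Fin n, Relation.ReflTransGen (fun a b => 0 < w a b) i j

/-!
Restricting a normalized `ψ` to `S` loses at most its penalty `P(ψ)` of mass, so
`λ(S) (1 - P(ψ)) ≤ E(ψ|_S)`. Young's inequality with a parameter `ε` bounds the energy of the
restriction by `(1 + ε) E(ψ) + C_ε P(ψ)` with `C_ε = (1 + ε⁻¹) ∑ᵢ dᵢ^(1-r)`, hence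
`λ(S) ≤ (1 + ε) (E(ψ) + α P(ψ))` as soon as `α ≥ C_ε + λ(S)`. Together with the trivial bound
`λ^α(χ_S) ≤ λ(S)` this squeezes `λ^α(χ_S)` between `λ(S) / (1 + ε)` and `λ(S)`.
-/

open Filter Topology

/-- The `α`-term of `lamAlpha w d r α (ind S)`, so that the latter is definitionally the infimum
of `gradE w ψ + α * penalty d r S ψ` over `dnorm d r ψ = 1`. -/
noncomputable def penalty {n : ℕ} (d : Fin n → ℝ) (r : ℝ) (S : Finset (Fin n))
    (ψ : Fin n → ℝ) : ℝ :=
  ∑ i, Real.rpow (d i) r * (1 - ind S i) * ψ i ^ 2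

lemma add_sq_le_one_add_mul_add {ε : ℝ} (hε : 0 < ε) (a b : ℝ) :
    (a + b) ^ 2 ≤ (1 + ε) * a ^ 2 + (1 + ε⁻¹) * b ^ 2 := by
  have key : (1 + ε) * a ^ 2 + (1 + ε⁻¹) * b ^ 2 - (a + b) ^ 2 = (ε * a - b) ^ 2 / ε := by
    field_simp
    ring
  exact sub_nonneg.1 (key ▸ by positivity)

lemma exists_pos_lt_div_one_add {a L : ℝ} (h : a < L) : ∃ ε > 0, a < L / (1 + ε) := by
  have hcont : Tendsto (fun ε : ℝ => L / (1 + ε)) (𝓝 0) (𝓝 (L / (1 + 0))) :=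
    tendsto_const_nhds.div (tendsto_const_nhds.add tendsto_id) (by norm_num)
  rw [add_zero, div_one] at hcont
  obtain ⟨ε, haε, hε⟩ := ((tendsto_nhdsWithin_of_tendsto_nhds (s := Set.Ioi 0) hcont).eventually
    (lt_mem_nhds h)).and self_mem_nhdsWithin |>.exists
  exact ⟨ε, hε, haε⟩

section Graph

variable {n : ℕ} {w : Fin n → Fin n → ℝ} {d : Fin n → ℝ} {r : ℝ} {S : Finset (Fin n)}

lemma gradE_nonneg (hw : ∀ i j, 0 ≤ w i j) (ψ : Fin n → ℝ) : 0 ≤ gradE w ψ :=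
  mul_nonneg (by norm_num) <| sum_nonneg fun i _ => sum_nonneg fun j _ =>
    mul_nonneg (hw i j) (sq_nonneg _)

lemma gradE_smul (c : ℝ) (ψ : Fin n → ℝ) : gradE w (c • ψ) = c ^ 2 * gradE w ψ := by
  simp only [gradE, Pi.smul_apply, smul_eq_mul, mul_sum]
  exact sum_congr rfl fun i _ => sum_congr rfl fun j _ => by ring

lemma dnorm_smul (c : ℝ) (ψ : Fin n → ℝ) : dnorm d r (c • ψ) = c ^ 2 * dnorm d r ψ := by
  simp only [dnorm, Pi.smul_apply, smul_eq_mul, mul_sum]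
  exact sum_congr rfl fun i _ => by ring

lemma dnorm_inv_sqrt_smul {ψ : Fin n → ℝ} (h : 0 < dnorm d r ψ) :
    dnorm d r ((√(dnorm d r ψ))⁻¹ • ψ) = 1 := by
  rw [dnorm_smul, inv_pow, Real.sq_sqrt h.le, inv_mul_cancel₀ h.ne']

lemma exists_dnorm_eq_one (hd : ∀ i, 0 < d i) (hS : S.Nonempty) :
    ∃ ψ : Fin n → ℝ, (∀ i, i ∉ S → ψ i = 0) ∧ dnorm d r ψ = 1 := by
  obtain ⟨i₀, hi₀⟩ := hS
  have hpos : 0 < dnorm d r (ind S) := by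
    refine sum_pos' (fun i _ => mul_nonneg (Real.rpow_nonneg (hd i).le r) (sq_nonneg _))
      ⟨i₀, mem_univ _, ?_⟩
    simpa [ind, hi₀] using Real.rpow_pos_of_pos (hd i₀) r
  exact ⟨_, fun i hi => by simp [ind, hi], dnorm_inv_sqrt_smul hpos⟩

lemma penalty_nonneg (hd : ∀ i, 0 ≤ d i) (ψ : Fin n → ℝ) : 0 ≤ penalty d r S ψ := by
  refine sum_nonneg fun i _ => mul_nonneg (mul_nonneg (Real.rpow_nonneg (hd i) r) ?_)
    (sq_nonneg _)
  by_cases hi : i ∈ S <;> simp [ind, hi]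

lemma penalty_eq_zero {ψ : Fin n → ℝ} (hψ : ∀ i, i ∉ S → ψ i = 0) : penalty d r S ψ = 0 :=
  sum_eq_zero fun i _ => by by_cases hi : i ∈ S <;> simp [ind, hi, hψ]

lemma dnorm_ind_mul (ψ : Fin n → ℝ) :
    dnorm d r (ind S * ψ) = dnorm d r ψ - penalty d r S ψ := by
  simp only [dnorm, penalty, ← sum_sub_distrib]
  exact sum_congr rfl fun i _ => by by_cases hi : i ∈ S <;> simp [ind, hi]

lemma sq_ind_mul_sub_le {ε : ℝ} (hε : 0 < ε) (ψ : Fin n → ℝ) (i j : Fin n) :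
    (ind S i * ψ i - ind S j * ψ j) ^ 2 ≤ (1 + ε) * (ψ i - ψ j) ^ 2 +
      (1 + ε⁻¹) * ((1 - ind S i) * ψ i ^ 2 + (1 - ind S j) * ψ j ^ 2) := by
  have young := add_sq_le_one_add_mul_add hε
  by_cases hi : i ∈ S <;> by_cases hj : j ∈ S <;> simp only [ind, hi, hj, if_true, if_false]
  · nlinarith [sq_nonneg (ψ i - ψ j)]
  · simpa using young (ψ i - ψ j) (ψ j)
  · nlinarith [young (ψ i - ψ j) (-ψ i)]
  · have : (0 : ℝ) ≤ ε⁻¹ := inv_nonneg.2 hε.le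
    nlinarith [sq_nonneg (ψ i - ψ j), sq_nonneg (ψ i), sq_nonneg (ψ j)]

lemma sum_sum_mul_add_eq (hsym : ∀ i j, w i j = w j i) (hd : ∀ i, d i = ∑ j, w i j)
    (u : Fin n → ℝ) : ∑ i, ∑ j, w i j * (u i + u j) = 2 * ∑ i, d i * u i := by
  have rows : ∑ i, ∑ j, w i j * u i = ∑ i, d i * u i :=
    sum_congr rfl fun i _ => by rw [hd i, sum_mul]
  have cols : ∑ i, ∑ j, w i j * u j = ∑ i, d i * u i := by
    rw [sum_comm, ← rows]
    simp only [hsym _ _]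
  simp only [mul_add, sum_add_distrib, rows, cols]
  ring

lemma gradE_ind_mul_le (hsym : ∀ i j, w i j = w j i) (hw : ∀ i j, 0 ≤ w i j)
    (hd : ∀ i, d i = ∑ j, w i j) {ε : ℝ} (hε : 0 < ε) (ψ : Fin n → ℝ) :
    gradE w (ind S * ψ) ≤
      (1 + ε) * gradE w ψ + (1 + ε⁻¹) * ∑ i, d i * ((1 - ind S i) * ψ i ^ 2) := by
  set u : Fin n → ℝ := fun i => (1 - ind S i) * ψ i ^ 2
  calc gradE w (ind S * ψ)
      ≤ 1 / 2 * ∑ i, ∑ j,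
          ((1 + ε) * (w i j * (ψ i - ψ j) ^ 2) + (1 + ε⁻¹) * (w i j * (u i + u j))) := by
        refine mul_le_mul_of_nonneg_left (sum_le_sum fun i _ => sum_le_sum fun j _ => ?_)
          (by norm_num)
        have := mul_le_mul_of_nonneg_left (sq_ind_mul_sub_le (S := S) hε ψ i j) (hw i j)
        simp only [Pi.mul_apply]
        linarith
    _ = (1 + ε) * gradE w ψ + (1 + ε⁻¹) * ∑ i, d i * u i := by
        simp only [sum_add_distrib, ← mul_sum, sum_sum_mul_add_eq hsym hd, gradE]
        ring

lemma sum_mul_le_sum_rpow_mul_sum_rpow_mul (hd : ∀ i, 0 < d i) {x : Fin n → ℝ}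
    (hx : ∀ i, 0 ≤ x i) (r : ℝ) :
    ∑ i, d i * x i ≤ (∑ i, d i ^ (1 - r)) * ∑ i, d i ^ r * x i := by
  rw [mul_sum]
  refine sum_le_sum fun i _ => ?_
  calc d i * x i = d i ^ (1 - r) * (d i ^ r * x i) := by
        rw [← mul_assoc, ← Real.rpow_add (hd i), sub_add_cancel, Real.rpow_one]
    _ ≤ (∑ i, d i ^ (1 - r)) * (d i ^ r * x i) :=
        mul_le_mul_of_nonneg_right
          (single_le_sum (fun j _ => (Real.rpow_pos_of_pos (hd j) _).le) (mem_univ i))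
          (mul_nonneg (Real.rpow_pos_of_pos (hd i) r).le (hx i))

lemma dirEig_nonneg (hw : ∀ i j, 0 ≤ w i j) : 0 ≤ dirEig w d r S :=
  Real.sInf_nonneg fun _ ⟨ψ, _, _, he⟩ => he ▸ gradE_nonneg hw ψ

lemma dirEig_mul_dnorm_le_gradE (hw : ∀ i j, 0 ≤ w i j) {φ : Fin n → ℝ}
    (hφ : ∀ i, i ∉ S → φ i = 0) : dirEig w d r S * dnorm d r φ ≤ gradE w φ := by
  rcases le_or_gt (dnorm d r φ) 0 with h | h
  · exact (mul_nonpos_of_nonneg_of_nonpos (dirEig_nonneg hw) h).trans (gradE_nonneg hw φ)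
  have hbdd : BddBelow { e : ℝ | ∃ ψ : Fin n → ℝ,
      (∀ i, i ∉ S → ψ i = 0) ∧ dnorm d r ψ = 1 ∧ e = gradE w ψ } :=
    ⟨0, fun _ ⟨ψ, _, _, he⟩ => he ▸ gradE_nonneg hw ψ⟩
  have hle := csInf_le hbdd ⟨(√(dnorm d r φ))⁻¹ • φ, fun i hi => by simp [hφ i hi],
    dnorm_inv_sqrt_smul h, rfl⟩
  rw [gradE_smul, inv_pow, Real.sq_sqrt h.le] at hle
  rw [mul_comm]
  exact (le_inv_mul_iff₀ h).1 hle

lemma lamAlpha_ind_le_dirEig (hw : ∀ i j, 0 ≤ w i j) (hd : ∀ i, 0 < d i) (hS : S.Nonempty)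
    {α : ℝ} (hα : 0 ≤ α) : lamAlpha w d r α (ind S) ≤ dirEig w d r S := by
  obtain ⟨ψ₀, hψ₀S, hψ₀⟩ := exists_dnorm_eq_one (r := r) hd hS
  refine csInf_le_csInf ⟨0, ?_⟩ ⟨_, ψ₀, hψ₀S, hψ₀, rfl⟩ ?_
  · rintro _ ⟨ψ, -, rfl⟩
    exact add_nonneg (gradE_nonneg hw ψ)
      (mul_nonneg hα (penalty_nonneg (S := S) (fun i => (hd i).le) ψ))
  · rintro _ ⟨ψ, hψS, hψ, rfl⟩
    refine ⟨ψ, hψ, ?_⟩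
    change _ = _ + α * penalty d r S ψ
    rw [penalty_eq_zero hψS, mul_zero, add_zero]

lemma dirEig_le_one_add_mul_energy (hsym : ∀ i j, w i j = w j i) (hw : ∀ i j, 0 ≤ w i j)
    (hd : ∀ i, d i = ∑ j, w i j) (hdpos : ∀ i, 0 < d i) {ε α : ℝ} (hε : 0 < ε)
    (hα : (1 + ε⁻¹) * ∑ i, d i ^ (1 - r) + dirEig w d r S ≤ α)
    {ψ : Fin n → ℝ} (hψ : dnorm d r ψ = 1) :
    dirEig w d r S ≤ (1 + ε) * (gradE w ψ + α * penalty d r S ψ) := by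
  set L := dirEig w d r S
  set P := penalty d r S ψ
  set M := ∑ i, d i ^ (1 - r)
  have hP : 0 ≤ P := penalty_nonneg (fun i => (hdpos i).le) ψ
  have hM : 0 ≤ M := sum_nonneg fun i _ => (Real.rpow_pos_of_pos (hdpos i) _).le
  have hα0 : 0 ≤ α :=
    (add_nonneg (mul_nonneg (by positivity) hM) (dirEig_nonneg hw)).trans hα
  have restrict : L * (1 - P) ≤ gradE w (ind S * ψ) := by
    rw [← hψ, ← dnorm_ind_mul]
    exact dirEig_mul_dnorm_le_gradE hw fun i hi => by simp [ind, hi]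
  have offS : ∑ i, d i * ((1 - ind S i) * ψ i ^ 2) ≤ M * P := by
    have := sum_mul_le_sum_rpow_mul_sum_rpow_mul hdpos (x := fun i => (1 - ind S i) * ψ i ^ 2)
      (fun i => mul_nonneg (by by_cases hi : i ∈ S <;> simp [ind, hi]) (sq_nonneg _)) r
    simpa only [P, penalty, Real.rpow_eq_pow, mul_assoc] using this
  have hε' : 0 ≤ 1 + ε⁻¹ := by positivity
  calc L ≤ (1 + ε) * gradE w ψ + ((1 + ε⁻¹) * M + L) * P := by
        linarith [gradE_ind_mul_le (S := S) hsym hw hd hε ψ, mul_le_mul_of_nonneg_left offS hε']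
    _ ≤ (1 + ε) * gradE w ψ + α * P := by gcongr
    _ ≤ (1 + ε) * (gradE w ψ + α * P) := by linarith [mul_nonneg (mul_nonneg hε.le hα0) hP]

lemma dirEig_div_one_add_le_lamAlpha (hsym : ∀ i j, w i j = w j i) (hw : ∀ i j, 0 ≤ w i j)
    (hd : ∀ i, d i = ∑ j, w i j) (hdpos : ∀ i, 0 < d i) (hS : S.Nonempty) {ε α : ℝ}
    (hε : 0 < ε) (hα : (1 + ε⁻¹) * ∑ i, d i ^ (1 - r) + dirEig w d r S ≤ α) :
    dirEig w d r S / (1 + ε) ≤ lamAlpha w d r α (ind S) := by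
  obtain ⟨ψ₀, -, hψ₀⟩ := exists_dnorm_eq_one (r := r) hdpos hS
  refine le_csInf ⟨_, ψ₀, hψ₀, rfl⟩ ?_
  rintro _ ⟨ψ, hψ, rfl⟩
  exact (div_le_iff₀' (by positivity)).2 (dirEig_le_one_add_mul_energy hsym hw hd hdpos hε hα hψ)

end Graph

theorem lamAlpha_tendsto_dirEig_general
    (n : ℕ) (w : Fin n → Fin n → ℝ)
    (hsym : ∀ i j, w i j = w j i) (hnn : ∀ i j, 0 ≤ w i j)
    (r : ℝ)
    (d : Fin n → ℝ) (hd : ∀ i, d i = ∑ j, w i j) (hdpos : ∀ i, 0 < d i)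
    (S : Finset (Fin n)) (hS : S.Nonempty) :
    Filter.Tendsto (fun α : ℝ => lamAlpha w d r α (ind S)) Filter.atTop
      (nhds (dirEig w d r S)) := by
  set L := dirEig w d r S
  refine tendsto_order.2 ⟨fun a ha => ?_, fun a ha => ?_⟩
  · obtain ⟨ε, hε, haε⟩ := exists_pos_lt_div_one_add ha
    filter_upwards [eventually_ge_atTop ((1 + ε⁻¹) * ∑ i, d i ^ (1 - r) + L)] with α hα
    exact haε.trans_le (dirEig_div_one_add_le_lamAlpha hsym hnn hd hdpos hS hε hα)
  · filter_upwards [eventually_ge_atTop 0] with α hα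
    exact (lamAlpha_ind_le_dirEig hnn hdpos hS hα).trans_lt ha

/-- `lim_{α → ∞} λ^α(χ_S) = λ(S)`. -/
theorem lamAlpha_tendsto_dirEig
    (n : ℕ) (w : Fin n → Fin n → ℝ)
    (hsym : ∀ i j, w i j = w j i) (hnn : ∀ i j, 0 ≤ w i j)
    (hconn : gconn w)
    (r : ℝ) (hr : r ∈ Set.Icc (0 : ℝ) 1)
    (d : Fin n → ℝ) (hd : ∀ i, d i = ∑ j, w i j) (hdpos : ∀ i, 0 < d i)
    (S : Finset (Fin n)) (hS : S.Nonempty) (hSc : Sᶜ.Nonempty) :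
    Filter.Tendsto (fun α : ℝ => lamAlpha w d r α (ind S)) Filter.atTop
      (nhds (dirEig w d r S)) :=
  lamAlpha_tendsto_dirEig_general n w hsym hnn r d hd hdpos S hS
end

section
/- At a fixed point of the rearrangement algorithm, the first-order optimality condition holds: for any admissible perturbation directions {δφ_i} at (φ₁,…,φ_k) ∈ 𝒜_k (i.e., δφ_i(v) = t_{i,v} with Σᵢ t_{i,v} = 0 for each v, t_{i,v} ≥ 0 where φ_i(v) = 0 and t_{i,v} ≤ 0 where φ_i(v) = 1), the directional derivative −α Σᵢ Σ_v t_{i,v} ψᵢ(v)² is nonnegative, where ψ_i is the normalized minimizer for λ^α(φ_i). -/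
open Finset

theorem sum_mul_nonpos_of_sum_eq_zero {ι R : Type*} [Fintype ι] [CommRing R] [LinearOrder R]
    [IsStrictOrderedRing R] {t f : ι → R} (m : ι) (ht : ∑ i, t i = 0)
    (ht_nonneg : ∀ i, i ≠ m → 0 ≤ t i) (hf : ∀ i, f i ≤ f m) :
    ∑ i, t i * f i ≤ 0 :=
  calc ∑ i, t i * f i ≤ ∑ i, t i * f m := by
        refine Finset.sum_le_sum fun i _ => ?_
        by_cases hi : i = m
        · rw [hi]
        · exact mul_le_mul_of_nonneg_left (hf i) (ht_nonneg i hi)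
    _ = 0 := by rw [← Finset.sum_mul, ht, zero_mul]

theorem fixed_point_first_order_optimality_general
    (n k : ℕ)
    (α : ℝ) (hα : 0 < α)
    (ℓ : Fin n → Fin k)
    (Φ : Fin k → Fin n → ℝ) (hΦ : Φ = fun i v => if ℓ v = i then (1 : ℝ) else 0)
    (ψ : Fin k → Fin n → ℝ)
    (hψpos : ∀ i v, 0 < ψ i v)
    (hfix : ∀ v j, ψ j v ≤ ψ (ℓ v) v)
    (t : Fin k → Fin n → ℝ)
    (htsum : ∀ v, ∑ i, t i v = 0)
    (htlo : ∀ i v, Φ i v = 0 → 0 ≤ t i v) :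
    0 ≤ -α * ∑ i, ∑ v, t i v * ψ i v ^ 2 := by
  have hvertex : ∀ v, ∑ i, t i v * ψ i v ^ 2 ≤ 0 := fun v =>
    sum_mul_nonpos_of_sum_eq_zero (ℓ v) (htsum v)
      (fun i hi => htlo i v (by simp [hΦ, Ne.symm hi]))
      (fun i => pow_le_pow_left₀ (hψpos i v).le (hfix v i) 2)
  have htotal : ∑ i, ∑ v, t i v * ψ i v ^ 2 ≤ 0 := by
    rw [Finset.sum_comm]
    exact Finset.sum_nonpos fun v _ => hvertex v
  exact mul_nonneg_of_nonpos_of_nonpos (by linarith) htotal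

/-- at a fixed point of the rearrangement algorithm the first-order
optimality condition holds: the directional derivative `-α Σᵢ Σ_v t_{i,v} ψᵢ(v)²` is
nonnegative for every admissible perturbation direction. -/
theorem fixed_point_first_order_optimality
    (n k : ℕ) (hk : 0 < k)
    (w : Fin n → Fin n → ℝ)
    (hsym : ∀ i j, w i j = w j i) (hnn : ∀ i j, 0 ≤ w i j)
    (hconn : gconn w)
    (r : ℝ) (hr : r ∈ Set.Icc (0 : ℝ) 1)
    (d : Fin n → ℝ) (hd : ∀ i, d i = ∑ j, w i j) (hdpos : ∀ i, 0 < d i)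
    (α : ℝ) (hα : 0 < α)
    (ℓ : Fin n → Fin k)
    (Φ : Fin k → Fin n → ℝ) (hΦ : Φ = fun i v => if ℓ v = i then (1 : ℝ) else 0)
    (ψ : Fin k → Fin n → ℝ)
    (hψpos : ∀ i v, 0 < ψ i v)
    (hψnorm : ∀ i, dnorm d r (ψ i) = 1)
    (hψmin : ∀ i, gradE w (ψ i)
      + α * ∑ v, Real.rpow (d v) r * (1 - Φ i v) * ψ i v ^ 2 = lamAlpha w d r α (Φ i))
    (hfix : ∀ v j, ψ j v ≤ ψ (ℓ v) v)
    (t : Fin k → Fin n → ℝ)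
    (htsum : ∀ v, ∑ i, t i v = 0)
    (htlo : ∀ i v, Φ i v = 0 → 0 ≤ t i v)
    (hthi : ∀ i v, Φ i v = 1 → t i v ≤ 0) :
    0 ≤ -α * ∑ i, ∑ v, t i v * ψ i v ^ 2 :=
  fixed_point_first_order_optimality_general n k α hα ℓ Φ hΦ ψ hψpos hfix t htsum htlo
end
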